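/- arXiv:2309.14698 — 4 statements merged into one kernel-verified Lean document; each statement's English description precedes it below -/
import Mathlib

section
/- Suppose A is stable, α is semi-stable, and Q is a stabilizing solution of the Riccati equation. Let δ and D be invertible m×m matrices with δD = R₀ − γQB, and set C∘ = δ⁻¹(C − γQA), β∘ = (β − αQB)D⁻¹, Θ(z) = D + zC∘(I − zA)⁻¹B, Ψ(z) = δ + γ(zI − α)⁻¹β∘. Then: (a) for every z ∈ ℂ such that I − zA and zI − α are invertible, Ω(z) = Ψ(z)Θ(z); (b) for every z ∈ ℂ with |z| ≤ 1, the matrices I − zA and I − zA∘ are invertible and Θ(z) is invertible with Θ(z)⁻¹ = D⁻¹ − zD⁻¹C∘(I − zA∘)⁻¹BD⁻¹; (c) for every z ∈ ℂ with |z| ≥ 1, the matrix zI − α∘ is invertible, and if moreover zI − α is invertible then Ψ(z) is invertible with Ψ(z)⁻¹ = δ⁻¹ − δ⁻¹γ(zI − α∘)⁻¹β∘δ⁻¹. -/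
open Matrix

lemma aux_unit_one_sub {n : ℕ} (X : Matrix (Fin n) (Fin n) ℂ)
    (hX : spectrum ℂ X ⊆ Metric.ball (0 : ℂ) 1) (z : ℂ) (hz : ‖z‖ ≤ 1) :
    IsUnit (1 - z • X) := by
  rcases eq_or_ne z 0 with rfl | hz0
  · simp
  · have hmem : z⁻¹ ∉ spectrum ℂ X := by
      intro h
      have h2 := hX h
      simp only [Metric.mem_ball, dist_zero_right] at h2
      have hzpos : (0:ℝ) < ‖z‖ := norm_pos_iff.mpr hz0
      have : (1 : ℝ) ≤ ‖z⁻¹‖ := by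
        rw [norm_inv]
        rw [le_inv_comm₀ one_pos hzpos]
        simpa using hz
      linarith
    rw [spectrum.notMem_iff, Algebra.algebraMap_eq_smul_one] at hmem
    have key : (1 : Matrix (Fin n) (Fin n) ℂ) - z • X
        = z • (z⁻¹ • (1 : Matrix (Fin n) (Fin n) ℂ) - X) := by
      rw [smul_sub, smul_smul, mul_inv_cancel₀ hz0, one_smul]
    rw [key, Matrix.isUnit_iff_isUnit_det, Matrix.det_smul]
    exact (IsUnit.pow _ (Ne.isUnit hz0)).mul ((Matrix.isUnit_iff_isUnit_det _).mp hmem)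

lemma aux_unit_smul_sub {n : ℕ} (X : Matrix (Fin n) (Fin n) ℂ)
    (hX : spectrum ℂ X ⊆ Metric.ball (0 : ℂ) 1) (z : ℂ) (hz : 1 ≤ ‖z‖) :
    IsUnit (z • (1 : Matrix (Fin n) (Fin n) ℂ) - X) := by
  have hmem : z ∉ spectrum ℂ X := by
    intro h
    have h2 := hX h
    simp only [Metric.mem_ball, dist_zero_right] at h2
    linarith
  rw [spectrum.notMem_iff, Algebra.algebraMap_eq_smul_one] at hmem
  exact hmem

lemma aux_key {s t : ℕ} (A : Matrix (Fin s) (Fin s) ℂ) (α : Matrix (Fin t) (Fin t) ℂ)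
    (Q : Matrix (Fin t) (Fin s) ℂ) (z : ℂ) :
    (z • (1 : Matrix (Fin t) (Fin t) ℂ) - α) * (Q * (1 - z • A))
      + z • ((z • (1 : Matrix (Fin t) (Fin t) ℂ) - α) * (Q * A))
      + α * (Q * (1 - z • A))
      = z • (Q - α * (Q * A)) := by
  simp only [Matrix.sub_mul, Matrix.mul_sub, Matrix.smul_mul, Matrix.mul_smul,
    smul_sub, smul_smul, Matrix.mul_one, Matrix.one_mul]
  abel

set_option maxHeartbeats 1000000 in
lemma aux_factor {m s t : ℕ}
    (R₀ : Matrix (Fin m) (Fin m) ℂ) (C : Matrix (Fin m) (Fin s) ℂ)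
    (A : Matrix (Fin s) (Fin s) ℂ) (B : Matrix (Fin s) (Fin m) ℂ)
    (γ : Matrix (Fin m) (Fin t) ℂ) (α : Matrix (Fin t) (Fin t) ℂ)
    (β : Matrix (Fin t) (Fin m) ℂ) (Q : Matrix (Fin t) (Fin s) ℂ)
    (δ D δ' D' : Matrix (Fin m) (Fin m) ℂ)
    (M : Matrix (Fin s) (Fin s) ℂ) (N : Matrix (Fin t) (Fin t) ℂ) (z : ℂ)
    (hδ' : δ * δ' = 1) (hD' : D' * D = 1)
    (hδD : δ * D = R₀ - γ * Q * B)
    (hRic : (β - α * Q * B) * D' * (δ' * (C - γ * Q * A)) = Q - α * Q * A)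
    (hM : (1 - z • A) * M = 1)
    (hN' : N * (z • (1 : Matrix (Fin t) (Fin t) ℂ) - α) = 1) :
    R₀ + z • (C * M * B) + γ * N * β
      = (δ + γ * N * ((β - α * Q * B) * D'))
        * (D + z • ((δ' * (C - γ * Q * A)) * M * B)) := by
  set u : Matrix (Fin s) (Fin s) ℂ := 1 - z • A with hu
  set v : Matrix (Fin t) (Fin t) ℂ := z • (1 : Matrix (Fin t) (Fin t) ℂ) - α with hv
  have hδ'' : ∀ (X : Matrix (Fin m) (Fin m) ℂ), δ * (δ' * X) = X := fun X => by
    rw [← Matrix.mul_assoc, hδ', Matrix.one_mul]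
  have hMu : ∀ (X : Matrix (Fin s) (Fin m) ℂ), u * (M * X) = X := fun X => by
    rw [← Matrix.mul_assoc, hM, Matrix.one_mul]
  have hNv : ∀ (X : Matrix (Fin t) (Fin m) ℂ), N * (v * X) = X := fun X => by
    rw [← Matrix.mul_assoc, hN', Matrix.one_mul]
  have hRic' : ∀ (X : Matrix (Fin s) (Fin m) ℂ),
      (β - α * (Q * B)) * (D' * (δ' * ((C - γ * (Q * A)) * X))) = (Q - α * (Q * A)) * X := by
    intro X
    simp only [← Matrix.mul_assoc]
    simp only [← Matrix.mul_assoc] at hRic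
    rw [hRic, Matrix.mul_assoc]
  have core : z • (γ * (N * ((Q - α * (Q * A)) * (M * B))))
      = γ * (Q * B) + z • (γ * ((Q * A) * (M * B))) + γ * (N * (α * (Q * B))) := by
    have h := congrArg (fun X => γ * (N * (X * (M * B)))) (aux_key A α Q z)
    simp only [← hu, ← hv] at h
    rw [show γ * (N * (z • (Q - α * (Q * A)) * (M * B)))
          = z • (γ * (N * ((Q - α * (Q * A)) * (M * B)))) by
        simp only [Matrix.smul_mul, Matrix.mul_smul]] at h
    rw [← h]
    simp only [Matrix.add_mul, Matrix.smul_mul, Matrix.mul_add, Matrix.mul_smul,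
      Matrix.mul_assoc, hNv, hMu]
  symm
  calc (δ + γ * N * ((β - α * Q * B) * D')) * (D + z • ((δ' * (C - γ * Q * A)) * M * B))
      = δ * D + z • ((C - γ * Q * A) * (M * B))
          + γ * (N * (β - α * Q * B))
          + z • (γ * (N * ((Q - α * (Q * A)) * (M * B)))) := by
        simp only [Matrix.mul_add, Matrix.add_mul, Matrix.mul_smul, Matrix.smul_mul,
          smul_add, Matrix.mul_assoc, hδ'', hRic']
        simp only [hD', Matrix.mul_one]
        abel
    _ = R₀ + z • (C * M * B) + γ * N * β := by
        rw [hδD, core]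
        simp only [Matrix.sub_mul, Matrix.mul_sub, Matrix.mul_assoc, smul_sub]
        abel

set_option maxHeartbeats 1000000 in
lemma aux_theta {m s : ℕ}
    (Ccirc : Matrix (Fin m) (Fin s) ℂ) (A Acirc : Matrix (Fin s) (Fin s) ℂ)
    (B : Matrix (Fin s) (Fin m) ℂ) (D D' : Matrix (Fin m) (Fin m) ℂ)
    (M M' : Matrix (Fin s) (Fin s) ℂ) (z : ℂ)
    (hD : D * D' = 1)
    (hAc : Acirc = A - B * (D' * Ccirc))
    (hM' : M * (1 - z • A) = 1)
    (hMc : (1 - z • Acirc) * M' = 1) :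
    (D + z • (Ccirc * M * B)) * (D' - z • (D' * Ccirc * M' * B * D')) = 1 := by
  have hDq : ∀ (X : Matrix (Fin m) (Fin m) ℂ), D * (D' * X) = X := fun X => by
    rw [← Matrix.mul_assoc, hD, Matrix.one_mul]
  have hRes : M - M' = z • (M * (B * (D' * (Ccirc * M')))) := by
    have h1 : M * ((1 - z • Acirc) * M') = M := by rw [hMc, Matrix.mul_one]
    have h2 : M * (1 - z • A) * M' = M' := by rw [hM', Matrix.one_mul]
    calc M - M' = M * ((1 - z • Acirc) * M') - M * (1 - z • A) * M' := by rw [h1, h2]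
      _ = M * (((1 - z • Acirc) - (1 - z • A)) * M') := by
          simp only [Matrix.sub_mul, Matrix.mul_sub, Matrix.mul_assoc]
      _ = z • (M * (B * (D' * (Ccirc * M')))) := by
          rw [hAc]
          have : (1 : Matrix (Fin s) (Fin s) ℂ) - z • (A - B * (D' * Ccirc)) - (1 - z • A)
              = z • (B * (D' * Ccirc)) := by
            simp only [smul_sub]; abel
          rw [this]
          simp only [Matrix.smul_mul, Matrix.mul_smul, Matrix.mul_assoc]
  have hK := congrArg (fun X => z • (Ccirc * (X * (B * D')))) hRes
  simp only [Matrix.sub_mul, Matrix.mul_sub, smul_sub, Matrix.smul_mul, Matrix.mul_smul,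
    smul_smul, Matrix.mul_assoc] at hK
  simp only [Matrix.mul_add, Matrix.add_mul, Matrix.mul_sub, Matrix.sub_mul,
    Matrix.mul_smul, Matrix.smul_mul, smul_add, smul_sub, smul_smul,
    Matrix.mul_assoc, hDq, hD]
  rw [← hK]
  abel

set_option maxHeartbeats 1000000 in
lemma aux_psi {m t : ℕ}
    (γ : Matrix (Fin m) (Fin t) ℂ) (α αcirc : Matrix (Fin t) (Fin t) ℂ)
    (βcirc : Matrix (Fin t) (Fin m) ℂ) (δ δ' : Matrix (Fin m) (Fin m) ℂ)
    (N N' : Matrix (Fin t) (Fin t) ℂ) (z : ℂ)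
    (hδ : δ * δ' = 1)
    (hαc : αcirc = α - βcirc * (δ' * γ))
    (hN' : N * (z • (1 : Matrix (Fin t) (Fin t) ℂ) - α) = 1)
    (hNc : (z • (1 : Matrix (Fin t) (Fin t) ℂ) - αcirc) * N' = 1) :
    (δ + γ * N * βcirc) * (δ' - δ' * γ * N' * βcirc * δ') = 1 := by
  have hδq : ∀ (X : Matrix (Fin m) (Fin m) ℂ), δ * (δ' * X) = X := fun X => by
    rw [← Matrix.mul_assoc, hδ, Matrix.one_mul]
  have hRes : N - N' = N * (βcirc * (δ' * (γ * N'))) := by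
    have h1 : N * ((z • (1 : Matrix (Fin t) (Fin t) ℂ) - αcirc) * N') = N := by
      rw [hNc, Matrix.mul_one]
    have h2 : N * (z • (1 : Matrix (Fin t) (Fin t) ℂ) - α) * N' = N' := by
      rw [hN', Matrix.one_mul]
    calc N - N' = N * ((z • (1 : Matrix (Fin t) (Fin t) ℂ) - αcirc) * N')
          - N * (z • (1 : Matrix (Fin t) (Fin t) ℂ) - α) * N' := by rw [h1, h2]
      _ = N * (((z • (1 : Matrix (Fin t) (Fin t) ℂ) - αcirc)
          - (z • (1 : Matrix (Fin t) (Fin t) ℂ) - α)) * N') := by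
          simp only [Matrix.sub_mul, Matrix.mul_sub, Matrix.mul_assoc]
      _ = N * (βcirc * (δ' * (γ * N'))) := by
          rw [hαc]
          have : (z • (1 : Matrix (Fin t) (Fin t) ℂ) - (α - βcirc * (δ' * γ)))
              - (z • (1 : Matrix (Fin t) (Fin t) ℂ) - α) = βcirc * (δ' * γ) := by abel
          rw [this]
          simp only [Matrix.mul_assoc]
  have hK := congrArg (fun X => γ * (X * (βcirc * δ'))) hRes
  simp only [Matrix.sub_mul, Matrix.mul_sub, Matrix.mul_assoc] at hK
  simp only [Matrix.mul_add, Matrix.add_mul, Matrix.mul_sub, Matrix.sub_mul,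
    Matrix.mul_smul, Matrix.smul_mul, smul_add, smul_sub,
    Matrix.mul_assoc, hδq, hδ]
  rw [← hK]
  abel
/-- pseudo-canonical factorization of `Ω` induced by a stabilizing solution
of the Riccati equation, together with invertibility of the factors inside/outside the
closed unit disc and formulas for their inverses. -/
theorem stmt_0 (m s t : ℕ) (hm : 0 < m) (hs : 0 < s) (ht : 0 < t)
    (R₀ : Matrix (Fin m) (Fin m) ℂ) (C : Matrix (Fin m) (Fin s) ℂ)
    (A : Matrix (Fin s) (Fin s) ℂ) (B : Matrix (Fin s) (Fin m) ℂ)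
    (γ : Matrix (Fin m) (Fin t) ℂ) (α : Matrix (Fin t) (Fin t) ℂ)
    (β : Matrix (Fin t) (Fin m) ℂ)
    -- `A` is stable, `α` is semi-stable
    (hA : spectrum ℂ A ⊆ Metric.ball (0 : ℂ) 1)
    (hα : spectrum ℂ α ⊆ Metric.closedBall (0 : ℂ) 1)
    -- `Q` is a stabilizing solution of the Riccati equation
    (Q : Matrix (Fin t) (Fin s) ℂ)
    (hQinv : IsUnit (R₀ - γ * Q * B))
    (hQ : Q = α * Q * A + (β - α * Q * B) * (R₀ - γ * Q * B)⁻¹ * (C - γ * Q * A))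
    (Acirc : Matrix (Fin s) (Fin s) ℂ)
    (hAcirc : Acirc = A - B * (R₀ - γ * Q * B)⁻¹ * (C - γ * Q * A))
    (αcirc : Matrix (Fin t) (Fin t) ℂ)
    (hαcirc : αcirc = α - (β - α * Q * B) * (R₀ - γ * Q * B)⁻¹ * γ)
    (hAcircStable : spectrum ℂ Acirc ⊆ Metric.ball (0 : ℂ) 1)
    (hαcircStable : spectrum ℂ αcirc ⊆ Metric.ball (0 : ℂ) 1)
    -- the factorization data
    (δ D : Matrix (Fin m) (Fin m) ℂ) (hδ : IsUnit δ) (hD : IsUnit D)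
    (hδD : δ * D = R₀ - γ * Q * B)
    (Ccirc : Matrix (Fin m) (Fin s) ℂ) (hCcirc : Ccirc = δ⁻¹ * (C - γ * Q * A))
    (βcirc : Matrix (Fin t) (Fin m) ℂ) (hβcirc : βcirc = (β - α * Q * B) * D⁻¹) :
    -- (a) Ω(z) = Ψ(z)Θ(z)
    (∀ z : ℂ, IsUnit (1 - z • A) → IsUnit (z • (1 : Matrix (Fin t) (Fin t) ℂ) - α) →
      R₀ + z • (C * (1 - z • A)⁻¹ * B) + γ * (z • (1 : Matrix (Fin t) (Fin t) ℂ) - α)⁻¹ * β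
        = (δ + γ * (z • (1 : Matrix (Fin t) (Fin t) ℂ) - α)⁻¹ * βcirc)
          * (D + z • (Ccirc * (1 - z • A)⁻¹ * B)))
    ∧
    -- (b) for |z| ≤ 1, Θ(z) is invertible with the stated inverse
    (∀ z : ℂ, ‖z‖ ≤ 1 →
      IsUnit (1 - z • A) ∧ IsUnit (1 - z • Acirc) ∧
      IsUnit (D + z • (Ccirc * (1 - z • A)⁻¹ * B)) ∧
      (D + z • (Ccirc * (1 - z • A)⁻¹ * B))⁻¹
        = D⁻¹ - z • (D⁻¹ * Ccirc * (1 - z • Acirc)⁻¹ * B * D⁻¹))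
    ∧
    -- (c) for |z| ≥ 1, Ψ(z) is invertible with the stated inverse
    (∀ z : ℂ, 1 ≤ ‖z‖ →
      IsUnit (z • (1 : Matrix (Fin t) (Fin t) ℂ) - αcirc) ∧
      (IsUnit (z • (1 : Matrix (Fin t) (Fin t) ℂ) - α) →
        IsUnit (δ + γ * (z • (1 : Matrix (Fin t) (Fin t) ℂ) - α)⁻¹ * βcirc) ∧
        (δ + γ * (z • (1 : Matrix (Fin t) (Fin t) ℂ) - α)⁻¹ * βcirc)⁻¹
          = δ⁻¹ - δ⁻¹ * γ * (z • (1 : Matrix (Fin t) (Fin t) ℂ) - αcirc)⁻¹ * βcirc * δ⁻¹)) := by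
  -- basic inverse facts
  have hδ1 : δ * δ⁻¹ = 1 := Matrix.mul_nonsing_inv _ ((Matrix.isUnit_iff_isUnit_det _).mp hδ)
  have hδ2 : δ⁻¹ * δ = 1 := Matrix.nonsing_inv_mul _ ((Matrix.isUnit_iff_isUnit_det _).mp hδ)
  have hD1 : D * D⁻¹ = 1 := Matrix.mul_nonsing_inv _ ((Matrix.isUnit_iff_isUnit_det _).mp hD)
  have hD2 : D⁻¹ * D = 1 := Matrix.nonsing_inv_mul _ ((Matrix.isUnit_iff_isUnit_det _).mp hD)
  have hRinv : (R₀ - γ * Q * B)⁻¹ = D⁻¹ * δ⁻¹ := by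
    rw [← hδD, Matrix.mul_inv_rev]
  have hFRE : (β - α * Q * B) * (R₀ - γ * Q * B)⁻¹ * (C - γ * Q * A) = Q - α * Q * A :=
    eq_sub_iff_add_eq'.mpr hQ.symm
  have hRic : (β - α * Q * B) * D⁻¹ * (δ⁻¹ * (C - γ * Q * A)) = Q - α * Q * A := by
    rw [hRinv] at hFRE
    rw [← hFRE]
    simp only [Matrix.mul_assoc]
  have hAc2 : Acirc = A - B * (D⁻¹ * Ccirc) := by
    rw [hAcirc, hRinv, hCcirc]
    simp only [Matrix.mul_assoc]
  have hαc2 : αcirc = α - βcirc * (δ⁻¹ * γ) := by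
    rw [hαcirc, hRinv, hβcirc]
    simp only [Matrix.mul_assoc]
  refine ⟨?_, ?_, ?_⟩
  · -- (a)
    intro z hUu hUv
    have hM : (1 - z • A) * (1 - z • A)⁻¹ = 1 :=
      Matrix.mul_nonsing_inv _ ((Matrix.isUnit_iff_isUnit_det _).mp hUu)
    have hN' : (z • (1 : Matrix (Fin t) (Fin t) ℂ) - α)⁻¹
        * (z • (1 : Matrix (Fin t) (Fin t) ℂ) - α) = 1 :=
      Matrix.nonsing_inv_mul _ ((Matrix.isUnit_iff_isUnit_det _).mp hUv)
    rw [hCcirc, hβcirc]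
    exact aux_factor R₀ C A B γ α β Q δ D δ⁻¹ D⁻¹ _ _ z hδ1 hD2 hδD hRic hM hN'
  · -- (b)
    intro z hz
    have hu : IsUnit (1 - z • A) := aux_unit_one_sub A hA z hz
    have huc : IsUnit (1 - z • Acirc) := aux_unit_one_sub Acirc hAcircStable z hz
    have hM' : (1 - z • A)⁻¹ * (1 - z • A) = 1 :=
      Matrix.nonsing_inv_mul _ ((Matrix.isUnit_iff_isUnit_det _).mp hu)
    have hMc : (1 - z • Acirc) * (1 - z • Acirc)⁻¹ = 1 :=
      Matrix.mul_nonsing_inv _ ((Matrix.isUnit_iff_isUnit_det _).mp huc)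
    have key : (D + z • (Ccirc * (1 - z • A)⁻¹ * B))
        * (D⁻¹ - z • (D⁻¹ * Ccirc * (1 - z • Acirc)⁻¹ * B * D⁻¹)) = 1 :=
      aux_theta Ccirc A Acirc B D D⁻¹ _ _ z hD1 hAc2 hM' hMc
    exact ⟨hu, huc,
      (Matrix.isUnit_iff_isUnit_det _).mpr (Matrix.isUnit_det_of_right_inverse key),
      Matrix.inv_eq_right_inv key⟩
  · -- (c)
    intro z hz
    have hvc : IsUnit (z • (1 : Matrix (Fin t) (Fin t) ℂ) - αcirc) :=
      aux_unit_smul_sub αcirc hαcircStable z hz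
    refine ⟨hvc, fun hv => ?_⟩
    have hN' : (z • (1 : Matrix (Fin t) (Fin t) ℂ) - α)⁻¹
        * (z • (1 : Matrix (Fin t) (Fin t) ℂ) - α) = 1 :=
      Matrix.nonsing_inv_mul _ ((Matrix.isUnit_iff_isUnit_det _).mp hv)
    have hNc : (z • (1 : Matrix (Fin t) (Fin t) ℂ) - αcirc)
        * (z • (1 : Matrix (Fin t) (Fin t) ℂ) - αcirc)⁻¹ = 1 :=
      Matrix.mul_nonsing_inv _ ((Matrix.isUnit_iff_isUnit_det _).mp hvc)
    have key : (δ + γ * (z • (1 : Matrix (Fin t) (Fin t) ℂ) - α)⁻¹ * βcirc)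
        * (δ⁻¹ - δ⁻¹ * γ * (z • (1 : Matrix (Fin t) (Fin t) ℂ) - αcirc)⁻¹ * βcirc * δ⁻¹) = 1 :=
      aux_psi γ α αcirc βcirc δ δ⁻¹ _ _ z hδ1 hαc2 hN' hNc
    exact ⟨(Matrix.isUnit_iff_isUnit_det _).mpr (Matrix.isUnit_det_of_right_inverse key),
      Matrix.inv_eq_right_inv key⟩
end

section
/- Suppose Q₁ and Q₂ are both stabilizing solutions of the Riccati equation, i.e., for i = 1, 2 the matrix R₀ − γQᵢB is invertible, Qᵢ = αQᵢA + (β − αQᵢB)(R₀ − γQᵢB)⁻¹(C − γQᵢA), and the closed-loop matrices A∘ᵢ = A − B(R₀ − γQᵢB)⁻¹(C − γQᵢA) and α∘ᵢ = α − (β − αQᵢB)(R₀ − γQᵢB)⁻¹γ all have their spectra contained in the open unit disc. Then Q₁ = Q₂. -/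
open Matrix Filter

attribute [local instance] Matrix.linftyOpNormedAddCommGroup Matrix.linftyOpNormedRing
  Matrix.linftyOpNormedAlgebra

/-- If the spectrum of a complex square matrix is contained in the open unit disc, then the
norms of its powers tend to zero. -/
lemma aux_pow_norm_tendsto_zero {n : ℕ} (hn : 0 < n) (M : Matrix (Fin n) (Fin n) ℂ)
    (h : spectrum ℂ M ⊆ Metric.ball (0 : ℂ) 1) :
    Tendsto (fun k => ‖M ^ k‖) atTop (nhds 0) := by
  haveI : Nonempty (Fin n) := Fin.pos_iff_nonempty.mp hn
  have hρ : spectralRadius ℂ M < 1 := by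
    have h1 : ∀ z ∈ spectrum ℂ M, ‖z‖₊ < (1 : NNReal) := by
      intro z hz
      have := h hz
      rw [Metric.mem_ball, dist_zero_right] at this
      exact_mod_cast this
    simpa using spectrum.spectralRadius_lt_of_forall_lt M h1
  obtain ⟨r, hr1, hr2⟩ := ENNReal.lt_iff_exists_nnreal_btwn.mp hρ
  have hr2' : (r : ℝ) < 1 := by exact_mod_cast hr2
  have hGel := spectrum.pow_nnnorm_pow_one_div_tendsto_nhds_spectralRadius M
  have hev : ∀ᶠ k : ℕ in atTop, (‖M ^ k‖₊ : ENNReal) ^ (1 / (k : ℝ)) < r :=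
    hGel.eventually_lt_const hr1
  have hbound : ∀ᶠ k in atTop, ‖M ^ k‖ ≤ (r : ℝ) ^ k := by
    filter_upwards [hev, Filter.eventually_ge_atTop 1] with k hk hk1
    have hk0 : (k : ℝ) ≠ 0 := Nat.cast_ne_zero.2 (by omega)
    have hx : (‖M ^ k‖₊ : ENNReal) < (r : ENNReal) ^ (k : ℝ) := by
      calc (‖M ^ k‖₊ : ENNReal) = ((‖M ^ k‖₊ : ENNReal) ^ (1 / (k : ℝ))) ^ (k : ℝ) := by
            rw [← ENNReal.rpow_mul, one_div, inv_mul_cancel₀ hk0, ENNReal.rpow_one]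
        _ < (r : ENNReal) ^ (k : ℝ) :=
            ENNReal.rpow_lt_rpow hk (by positivity)
    have hx' : (‖M ^ k‖₊ : ENNReal) < ((r ^ k : NNReal) : ENNReal) := by
      rwa [ENNReal.coe_pow, ← ENNReal.rpow_natCast ((r : ENNReal)) k]
    have hx'' : ‖M ^ k‖₊ < r ^ k := ENNReal.coe_lt_coe.mp hx'
    have : ‖M ^ k‖ < (r : ℝ) ^ k := by exact_mod_cast hx''
    exact this.le
  exact squeeze_zero' (Filter.Eventually.of_forall fun k => norm_nonneg _) hbound
    (tendsto_pow_atTop_nhds_zero_of_lt_one r.coe_nonneg hr2')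

/-- The key algebraic identity: the difference of two solutions of the Riccati equation
satisfies a Stein-type equation with the closed-loop matrices. -/
lemma aux_riccati_diff {m s t : ℕ}
    (R₀ : Matrix (Fin m) (Fin m) ℂ) (C : Matrix (Fin m) (Fin s) ℂ)
    (A : Matrix (Fin s) (Fin s) ℂ) (B : Matrix (Fin s) (Fin m) ℂ)
    (γ : Matrix (Fin m) (Fin t) ℂ) (α : Matrix (Fin t) (Fin t) ℂ)
    (β : Matrix (Fin t) (Fin m) ℂ) (Q₁ Q₂ : Matrix (Fin t) (Fin s) ℂ)
    (E₁ E₂ : Matrix (Fin m) (Fin m) ℂ)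
    (hE₁ : E₁ * (R₀ - γ * Q₁ * B) = 1)
    (hE₂ : (R₀ - γ * Q₂ * B) * E₂ = 1)
    (h₁ : Q₁ = α * Q₁ * A + (β - α * Q₁ * B) * E₁ * (C - γ * Q₁ * A))
    (h₂ : Q₂ = α * Q₂ * A + (β - α * Q₂ * B) * E₂ * (C - γ * Q₂ * A)) :
    Q₁ - Q₂ = (α - (β - α * Q₁ * B) * E₁ * γ) * (Q₁ - Q₂)
      * (A - B * E₂ * (C - γ * Q₂ * A)) := by
  have cert :
      ((α * Q₁ * A + (β - α * Q₁ * B) * E₁ * (C - γ * Q₁ * A))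
        - (α * Q₂ * A + (β - α * Q₂ * B) * E₂ * (C - γ * Q₂ * A)))
      - (α - (β - α * Q₁ * B) * E₁ * γ) * (Q₁ - Q₂) * (A - B * E₂ * (C - γ * Q₂ * A))
      = (β - α * Q₁ * B) * E₁ * (1 - (R₀ - γ * Q₂ * B) * E₂) * (C - γ * Q₂ * A)
        + (β - α * Q₁ * B) * (E₁ * (R₀ - γ * Q₁ * B) - 1) * (E₂ * (C - γ * Q₂ * A)) := by
    simp only [Matrix.mul_sub, Matrix.sub_mul, Matrix.mul_add, Matrix.add_mul,
      Matrix.mul_one, Matrix.one_mul, Matrix.mul_assoc]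
    abel
  rw [hE₁, hE₂] at cert
  simp only [sub_self, Matrix.zero_mul, Matrix.mul_zero, add_zero, zero_add] at cert
  have key := sub_eq_zero.mp cert
  conv_lhs => rw [h₁, h₂]
  exact key

/-- uniqueness of the stabilizing solution of the Riccati equation. -/
theorem stmt_4 (m s t : ℕ) (hm : 0 < m) (hs : 0 < s) (ht : 0 < t)
    (R₀ : Matrix (Fin m) (Fin m) ℂ) (C : Matrix (Fin m) (Fin s) ℂ)
    (A : Matrix (Fin s) (Fin s) ℂ) (B : Matrix (Fin s) (Fin m) ℂ)
    (γ : Matrix (Fin m) (Fin t) ℂ) (α : Matrix (Fin t) (Fin t) ℂ)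
    (β : Matrix (Fin t) (Fin m) ℂ)
    (Q₁ Q₂ : Matrix (Fin t) (Fin s) ℂ)
    (h₁inv : IsUnit (R₀ - γ * Q₁ * B))
    (h₁ : Q₁ = α * Q₁ * A + (β - α * Q₁ * B) * (R₀ - γ * Q₁ * B)⁻¹ * (C - γ * Q₁ * A))
    (h₁A : spectrum ℂ (A - B * (R₀ - γ * Q₁ * B)⁻¹ * (C - γ * Q₁ * A))
      ⊆ Metric.ball (0 : ℂ) 1)
    (h₁α : spectrum ℂ (α - (β - α * Q₁ * B) * (R₀ - γ * Q₁ * B)⁻¹ * γ)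
      ⊆ Metric.ball (0 : ℂ) 1)
    (h₂inv : IsUnit (R₀ - γ * Q₂ * B))
    (h₂ : Q₂ = α * Q₂ * A + (β - α * Q₂ * B) * (R₀ - γ * Q₂ * B)⁻¹ * (C - γ * Q₂ * A))
    (h₂A : spectrum ℂ (A - B * (R₀ - γ * Q₂ * B)⁻¹ * (C - γ * Q₂ * A))
      ⊆ Metric.ball (0 : ℂ) 1)
    (h₂α : spectrum ℂ (α - (β - α * Q₂ * B) * (R₀ - γ * Q₂ * B)⁻¹ * γ)
      ⊆ Metric.ball (0 : ℂ) 1) :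
    Q₁ = Q₂ := by
  set M := α - (β - α * Q₁ * B) * (R₀ - γ * Q₁ * B)⁻¹ * γ with hM
  set N := A - B * (R₀ - γ * Q₂ * B)⁻¹ * (C - γ * Q₂ * A) with hN
  have hd₁ : IsUnit (R₀ - γ * Q₁ * B).det := (Matrix.isUnit_iff_isUnit_det _).mp h₁inv
  have hd₂ : IsUnit (R₀ - γ * Q₂ * B).det := (Matrix.isUnit_iff_isUnit_det _).mp h₂inv
  have key : Q₁ - Q₂ = M * (Q₁ - Q₂) * N :=
    aux_riccati_diff R₀ C A B γ α β Q₁ Q₂ _ _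
      (Matrix.nonsing_inv_mul _ hd₁) (Matrix.mul_nonsing_inv _ hd₂) h₁ h₂
  have powk : ∀ k : ℕ, Q₁ - Q₂ = M ^ k * (Q₁ - Q₂) * N ^ k := by
    intro k
    induction k with
    | zero => simp
    | succ k ih =>
      calc Q₁ - Q₂ = M ^ k * (Q₁ - Q₂) * N ^ k := ih
        _ = M ^ k * (M * (Q₁ - Q₂) * N) * N ^ k := by rw [← key]
        _ = M ^ (k + 1) * (Q₁ - Q₂) * N ^ (k + 1) := by
            rw [pow_succ, pow_succ']
            simp only [Matrix.mul_assoc]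
  have hMten : Tendsto (fun k => ‖M ^ k‖) atTop (nhds 0) :=
    aux_pow_norm_tendsto_zero ht M h₁α
  have hNten : Tendsto (fun k => ‖N ^ k‖) atTop (nhds 0) :=
    aux_pow_norm_tendsto_zero hs N h₂A
  have hle : ∀ k : ℕ, ‖Q₁ - Q₂‖ ≤ ‖M ^ k‖ * (‖Q₁ - Q₂‖ * ‖N ^ k‖) := by
    intro k
    calc ‖Q₁ - Q₂‖ = ‖M ^ k * ((Q₁ - Q₂) * N ^ k)‖ := by
          rw [← Matrix.mul_assoc, ← powk k]
      _ ≤ ‖M ^ k‖ * ‖(Q₁ - Q₂) * N ^ k‖ := Matrix.linfty_opNorm_mul _ _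
      _ ≤ ‖M ^ k‖ * (‖Q₁ - Q₂‖ * ‖N ^ k‖) := by
          gcongr
          exact Matrix.linfty_opNorm_mul _ _
  have hzero : Tendsto (fun k => ‖M ^ k‖ * (‖Q₁ - Q₂‖ * ‖N ^ k‖)) atTop (nhds 0) := by
    have := hMten.mul ((tendsto_const_nhds (x := ‖Q₁ - Q₂‖)).mul hNten)
    simpa using this
  have : ‖Q₁ - Q₂‖ ≤ 0 := ge_of_tendsto' hzero hle
  have : Q₁ - Q₂ = 0 := by
    rw [← norm_le_zero_iff]
    exact this
  exact sub_eq_zero.mp this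
end

section
/- Suppose the pairs (C, A) and (γ, α) are observable, the pairs (A, B) and (α, β) are controllable, A is stable, α is semi-stable, and Q is a stabilizing solution of the Riccati equation. Let δ and D be invertible m×m matrices with δD = R₀ − γQB and set C∘ = δ⁻¹(C − γQA) and β∘ = (β − αQB)D⁻¹. Then the pair (C∘, A) is observable and the pair (α, β∘) is controllable; that is, the state-space realizations Θ(z) = D + zC∘(I − zA)⁻¹B and Ψ(z) = δ + γ(zI − α)⁻¹β∘ are minimal. -/
open Matrix Filter Finset

/-- The pair `(C, A)` is observable: the intersection of the kernels of `C Aᵏ`,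
`k = 0, …, s-1`, is trivial. -/
def Observable {m s : ℕ} (C : Matrix (Fin m) (Fin s) ℂ) (A : Matrix (Fin s) (Fin s) ℂ) :
    Prop :=
  ∀ x : Fin s → ℂ, (∀ k : ℕ, k < s → (C * A ^ k) *ᵥ x = 0) → x = 0

/-- The pair `(A, B)` is controllable: the columns of `B, AB, …, A^{s-1}B` span `ℂˢ`. -/
def Controllable {m s : ℕ} (A : Matrix (Fin s) (Fin s) ℂ) (B : Matrix (Fin s) (Fin m) ℂ) :
    Prop :=
  Submodule.span ℂ
    {v : Fin s → ℂ | ∃ k : ℕ, k < s ∧ ∃ j : Fin m, v = fun i => (A ^ k * B) i j} = ⊤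

lemma aux_sum_mulVec {ι : Type*} {p q : ℕ} (s : Finset ι) (f : ι → Matrix (Fin p) (Fin q) ℂ)
    (x : Fin q → ℂ) : (∑ i ∈ s, f i) *ᵥ x = ∑ i ∈ s, f i *ᵥ x := by
  induction s using Finset.cons_induction with
  | empty => simp
  | cons a s ha ih => rw [Finset.sum_cons, Finset.sum_cons, Matrix.add_mulVec, ih]

lemma aux_pow_card {q : ℕ} (hq : 0 < q) (A : Matrix (Fin q) (Fin q) ℂ) :
    A ^ q = -∑ i ∈ range q, A.charpoly.coeff i • A ^ i := by
  haveI : Nonempty (Fin q) := ⟨⟨0, hq⟩⟩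
  have h0 := Matrix.aeval_self_charpoly A
  rw [Polynomial.aeval_eq_sum_range, Matrix.charpoly_natDegree_eq_dim, Fintype.card_fin,
    Finset.sum_range_succ] at h0
  have hc : A.charpoly.coeff q = 1 := by
    have := (Matrix.charpoly_monic A).coeff_natDegree
    rwa [Matrix.charpoly_natDegree_eq_dim, Fintype.card_fin] at this
  rw [hc, one_smul] at h0
  linear_combination (norm := module) h0

lemma aux_ch_ext {p q : ℕ} (hq : 0 < q) (M : Matrix (Fin p) (Fin q) ℂ)
    (A : Matrix (Fin q) (Fin q) ℂ) (x : Fin q → ℂ)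
    (h : ∀ k, k < q → (M * A ^ k) *ᵥ x = 0) : ∀ k, (M * A ^ k) *ᵥ x = 0 := by
  intro k
  induction k using Nat.strong_induction_on with
  | _ k ih =>
  by_cases hk : k < q
  · exact h k hk
  push_neg at hk
  have hdecomp : M * A ^ k = ∑ i ∈ range q,
      (-(A.charpoly.coeff i)) • (M * A ^ (i + (k - q))) := by
    have : A ^ k = A ^ q * A ^ (k - q) := by rw [← pow_add]; congr 1; omega
    rw [this, aux_pow_card hq A]
    simp only [Finset.sum_mul, Finset.mul_sum, smul_mul_assoc, mul_smul_comm, pow_add,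
      mul_assoc, Matrix.mul_neg, neg_smul, Finset.sum_neg_distrib, neg_mul]
    rw [Matrix.mul_sum]
    simp [mul_smul_comm]
  rw [hdecomp, aux_sum_mulVec]
  refine Finset.sum_eq_zero fun i hi => ?_
  rw [Matrix.smul_mulVec, ih (i + (k - q)) (by simp at hi; omega), smul_zero]

lemma aux_spectrum_transpose {q : ℕ} (M : Matrix (Fin q) (Fin q) ℂ) :
    spectrum ℂ Mᵀ = spectrum ℂ M := by
  ext z
  simp only [spectrum.mem_iff]
  have h : algebraMap ℂ (Matrix (Fin q) (Fin q) ℂ) z - Mᵀ =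
      (algebraMap ℂ (Matrix (Fin q) (Fin q) ℂ) z - M)ᵀ := by
    rw [Matrix.transpose_sub, Algebra.algebraMap_eq_smul_one, Matrix.transpose_smul,
      Matrix.transpose_one]
  rw [h, Matrix.isUnit_iff_isUnit_det, Matrix.det_transpose, ← Matrix.isUnit_iff_isUnit_det]

section NormedLemmas

attribute [local instance] Matrix.linftyOpNormedAddCommGroup Matrix.linftyOpNormedRing
  Matrix.linftyOpNormedAlgebra

lemma aux_pow_nnnorm_lt {q : ℕ} (hq : 0 < q) (N : Matrix (Fin q) (Fin q) ℂ) (u : NNReal)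
    (hu : spectralRadius ℂ N < u) : ∀ᶠ n : ℕ in atTop, ‖N ^ n‖₊ < u ^ n := by
  haveI : Nonempty (Fin q) := ⟨⟨0, hq⟩⟩
  have hg := spectrum.pow_nnnorm_pow_one_div_tendsto_nhds_spectralRadius
    (N : Matrix (Fin q) (Fin q) ℂ)
  have hev : ∀ᶠ n : ℕ in atTop, ((‖N ^ n‖₊ : ENNReal) ^ (1 / (n:ℝ))) < u :=
    hg.eventually_lt_const hu
  filter_upwards [hev, eventually_ge_atTop 1] with n hn hn1
  have hne : (n:ℝ) ≠ 0 := by positivity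
  have h2 : ((‖N ^ n‖₊ : ENNReal) ^ (1 / (n:ℝ))) ^ (n:ℝ) < (u : ENNReal) ^ (n:ℝ) :=
    ENNReal.rpow_lt_rpow hn (by positivity)
  rw [← ENNReal.rpow_mul, one_div, inv_mul_cancel₀ hne, ENNReal.rpow_one,
    ENNReal.rpow_natCast] at h2
  exact_mod_cast h2

lemma aux_sr_le {q : ℕ} (N : Matrix (Fin q) (Fin q) ℂ)
    (hN : spectrum ℂ N ⊆ Metric.closedBall (0:ℂ) 1) : spectralRadius ℂ N ≤ 1 := by
  rw [spectralRadius]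
  refine iSup₂_le fun z hz => ?_
  have := hN hz
  simp only [Metric.mem_closedBall, dist_zero_right] at this
  exact_mod_cast (by exact_mod_cast this : ‖z‖₊ ≤ (1:NNReal))

lemma aux_sr_lt {q : ℕ} (hq : 0 < q) (N : Matrix (Fin q) (Fin q) ℂ)
    (hN : spectrum ℂ N ⊆ Metric.ball (0:ℂ) 1) : spectralRadius ℂ N < 1 := by
  haveI : Nonempty (Fin q) := ⟨⟨0, hq⟩⟩
  haveI : Nontrivial (Matrix (Fin q) (Fin q) ℂ) := inferInstance
  have := spectrum.spectralRadius_lt_of_forall_lt (a := N) (r := 1) ?_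
  · simpa using this
  · intro z hz
    have := hN hz
    simpa [Metric.mem_ball, dist_zero_right, ← NNReal.coe_lt_coe] using this

lemma aux_pick (a b : ENNReal) (ha : a ≤ 1) (hb : b < 1) :
    ∃ u r : NNReal, a < u ∧ b < r ∧ u * r < 1 := by
  have hbt : b ≠ ⊤ := hb.ne_top
  set r0 : NNReal := b.toNNReal with hr0
  have hr01 : r0 < 1 := by
    rw [← ENNReal.coe_lt_one_iff, hr0, ENNReal.coe_toNNReal hbt]; exact hb
  set r : NNReal := (r0 + 1) / 2 with hr
  have hrhalf : (1:NNReal)/2 ≤ r := by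
    rw [← NNReal.coe_le_coe]; push_cast [hr]
    have : (0:ℝ) ≤ r0 := r0.coe_nonneg
    linarith
  have hrlt1 : r < 1 := by
    rw [← NNReal.coe_lt_coe] at hr01 ⊢; push_cast [hr] at *; linarith
  have hr0r : r0 < r := by
    rw [← NNReal.coe_lt_coe] at hr01 ⊢; push_cast [hr] at *; linarith
  set u : NNReal := (1 + r) / (2 * r) with hu
  have hrpos : (0:ℝ) < (r:ℝ) := by
    have := hrhalf; rw [← NNReal.coe_le_coe] at this; push_cast at this; linarith
  have hrlt1R : (r:ℝ) < 1 := by exact_mod_cast hrlt1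
  have hu1 : 1 < u := by
    rw [← NNReal.coe_lt_coe]; push_cast [hu]
    rw [lt_div_iff₀ (by positivity)]
    nlinarith
  have hur : u * r < 1 := by
    rw [← NNReal.coe_lt_coe]; push_cast [hu]
    rw [div_mul_eq_mul_div, div_lt_one (by positivity)]
    nlinarith
  refine ⟨u, r, lt_of_le_of_lt ha ?_, ?_, hur⟩
  · exact_mod_cast ENNReal.coe_lt_coe.mpr hu1
  · rw [← ENNReal.coe_toNNReal hbt]; exact_mod_cast hr0r

lemma aux_key_vec {p q : ℕ} (hp : 0 < p) (hq : 0 < q)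
    (M : Matrix (Fin p) (Fin p) ℂ) (N : Matrix (Fin q) (Fin q) ℂ)
    (hM : spectrum ℂ M ⊆ Metric.closedBall (0:ℂ) 1)
    (hN : spectrum ℂ N ⊆ Metric.closedBall (0:ℂ) 1)
    (hor : spectrum ℂ M ⊆ Metric.ball (0:ℂ) 1 ∨ spectrum ℂ N ⊆ Metric.ball (0:ℂ) 1)
    (P : Matrix (Fin p) (Fin q) ℂ) (x : Fin q → ℂ) (v : Fin p → ℂ)
    (h : ∀ n : ℕ, v = (M ^ n * P * N ^ n) *ᵥ x) : v = 0 := by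
  obtain ⟨u, r, hMu, hNr, hur⟩ : ∃ u r : NNReal,
      spectralRadius ℂ M < u ∧ spectralRadius ℂ N < r ∧ u * r < 1 := by
    rcases hor with hM' | hN'
    · obtain ⟨u, r, h1, h2, h3⟩ := aux_pick (spectralRadius ℂ N) (spectralRadius ℂ M)
        (aux_sr_le N hN) (aux_sr_lt hp M hM')
      exact ⟨r, u, h2, h1, by rwa [mul_comm]⟩
    · exact aux_pick (spectralRadius ℂ M) (spectralRadius ℂ N) (aux_sr_le M hM)
        (aux_sr_lt hq N hN')
  have evM := aux_pow_nnnorm_lt hp M u hMu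
  have evN := aux_pow_nnnorm_lt hq N r hNr
  have htend : Tendsto (fun n : ℕ => ‖P‖₊ * ‖x‖₊ * (u * r) ^ n) atTop (nhds 0) := by
    have h0 : Tendsto (fun n : ℕ => (u * r) ^ n) atTop (nhds 0) :=
      NNReal.tendsto_pow_atTop_nhds_zero_of_lt_one hur
    simpa using h0.const_mul (‖P‖₊ * ‖x‖₊)
  have hb : ∀ᶠ n : ℕ in atTop, ‖v‖₊ ≤ ‖P‖₊ * ‖x‖₊ * (u * r) ^ n := by
    filter_upwards [evM, evN] with n hMn hNn
    calc ‖v‖₊ = ‖(M ^ n * P * N ^ n) *ᵥ x‖₊ := by rw [← h n]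
    _ ≤ ‖M ^ n * P * N ^ n‖₊ * ‖x‖₊ := Matrix.linfty_opNNNorm_mulVec _ _
    _ ≤ ‖M ^ n * P‖₊ * ‖N ^ n‖₊ * ‖x‖₊ :=
        mul_le_mul' (Matrix.linfty_opNNNorm_mul _ _) le_rfl
    _ ≤ ‖M ^ n‖₊ * ‖P‖₊ * ‖N ^ n‖₊ * ‖x‖₊ :=
        mul_le_mul' (mul_le_mul' (Matrix.linfty_opNNNorm_mul _ _) le_rfl) le_rfl
    _ ≤ u ^ n * ‖P‖₊ * r ^ n * ‖x‖₊ :=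
        mul_le_mul' (mul_le_mul' (mul_le_mul' hMn.le le_rfl) hNn.le) le_rfl
    _ = ‖P‖₊ * ‖x‖₊ * (u * r) ^ n := by ring
  have hv0 : ‖v‖₊ ≤ 0 := ge_of_tendsto htend hb
  simpa using nnnorm_eq_zero.mp (le_antisymm hv0 zero_le)

end NormedLemmas

lemma aux_dual_of_span_top {t : ℕ} (S : Set (Fin t → ℂ)) (h : Submodule.span ℂ S = ⊤)
    (y : Fin t → ℂ) (hy : ∀ v ∈ S, y ⬝ᵥ v = 0) : y = 0 := by
  have hall : ∀ v : Fin t → ℂ, y ⬝ᵥ v = 0 := by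
    intro v
    have hv : v ∈ Submodule.span ℂ S := h ▸ Submodule.mem_top
    induction hv using Submodule.span_induction with
    | mem v hvS => exact hy v hvS
    | zero => simp
    | add v w _ _ hv hw => rw [dotProduct_add, hv, hw, add_zero]
    | smul c v _ hv => rw [dotProduct_smul, hv, smul_zero]
  funext i
  have := hall (Pi.single i 1)
  simpa [dotProduct, Pi.single_apply] using this

lemma aux_span_top_of_dual {t : ℕ} (S : Set (Fin t → ℂ))
    (h : ∀ y : Fin t → ℂ, (∀ v ∈ S, y ⬝ᵥ v = 0) → y = 0) : Submodule.span ℂ S = ⊤ := by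
  by_contra hne
  obtain ⟨f, hf0, hfbot⟩ := Submodule.exists_dual_map_eq_bot_of_lt_top
    (p := Submodule.span ℂ S) (lt_top_iff_ne_top.mpr hne) inferInstance
  set y : Fin t → ℂ := fun i => f (Pi.single i 1) with hydef
  have hfy : ∀ v, f v = y ⬝ᵥ v := by
    intro v
    have hv : v = ∑ i, v i • (Pi.single i (1:ℂ) : Fin t → ℂ) := by
      simp_rw [← Pi.single_smul, smul_eq_mul, mul_one]
      exact (Finset.univ_sum_single v).symm
    conv_lhs => rw [hv]
    rw [map_sum]
    simp only [_root_.map_smul, smul_eq_mul, dotProduct, hydef]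
    exact Finset.sum_congr rfl fun i _ => mul_comm _ _
  have hy0 : y = 0 := by
    refine h y fun v hvS => ?_
    rw [← hfy]
    have : f v ∈ Submodule.map f (Submodule.span ℂ S) :=
      Submodule.mem_map_of_mem (Submodule.subset_span hvS)
    rw [hfbot] at this
    simpa using this
  exact hf0 (LinearMap.ext fun v => by rw [hfy, hy0]; simp)

set_option maxHeartbeats 2000000 in
/-- if the realization of `Ω` is minimal, `A` is stable, `α` is semi-stable
and `Q` is a stabilizing solution of the Riccati equation, then the realizations of the
factors `Θ` and `Ψ` are minimal: `(C∘, A)` is observable and `(α, β∘)` is controllable. -/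
theorem stmt_8 (m s t : ℕ) (hm : 0 < m) (hs : 0 < s) (ht : 0 < t)
    (R₀ : Matrix (Fin m) (Fin m) ℂ) (C : Matrix (Fin m) (Fin s) ℂ)
    (A : Matrix (Fin s) (Fin s) ℂ) (B : Matrix (Fin s) (Fin m) ℂ)
    (γ : Matrix (Fin m) (Fin t) ℂ) (α : Matrix (Fin t) (Fin t) ℂ)
    (β : Matrix (Fin t) (Fin m) ℂ)
    (hObsCA : Observable C A) (hObsγα : Observable γ α)
    (hConAB : Controllable A B) (hConαβ : Controllable α β)
    (hA : spectrum ℂ A ⊆ Metric.ball (0 : ℂ) 1)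
    (hα : spectrum ℂ α ⊆ Metric.closedBall (0 : ℂ) 1)
    (Q : Matrix (Fin t) (Fin s) ℂ)
    (hQinv : IsUnit (R₀ - γ * Q * B))
    (hQ : Q = α * Q * A + (β - α * Q * B) * (R₀ - γ * Q * B)⁻¹ * (C - γ * Q * A))
    (hAcircStable : spectrum ℂ (A - B * (R₀ - γ * Q * B)⁻¹ * (C - γ * Q * A))
      ⊆ Metric.ball (0 : ℂ) 1)
    (hαcircStable : spectrum ℂ (α - (β - α * Q * B) * (R₀ - γ * Q * B)⁻¹ * γ)
      ⊆ Metric.ball (0 : ℂ) 1)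
    (δ D : Matrix (Fin m) (Fin m) ℂ) (hδ : IsUnit δ) (hD : IsUnit D)
    (hδD : δ * D = R₀ - γ * Q * B)
    (Ccirc : Matrix (Fin m) (Fin s) ℂ) (hCcirc : Ccirc = δ⁻¹ * (C - γ * Q * A))
    (βcirc : Matrix (Fin t) (Fin m) ℂ) (hβcirc : βcirc = (β - α * Q * B) * D⁻¹) :
    Observable Ccirc A ∧ Controllable α βcirc := by
  have hδdet : IsUnit δ.det := (Matrix.isUnit_iff_isUnit_det δ).mp hδ
  have hDdet : IsUnit D.det := (Matrix.isUnit_iff_isUnit_det D).mp hD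
  have hSdet : IsUnit (R₀ - γ * Q * B).det :=
    (Matrix.isUnit_iff_isUnit_det _).mp hQinv
  have hδinv : δ * δ⁻¹ = 1 := Matrix.mul_nonsing_inv δ hδdet
  have hδinv' : δ⁻¹ * δ = 1 := Matrix.nonsing_inv_mul δ hδdet
  have hRS : (R₀ - γ * Q * B)⁻¹ * (R₀ - γ * Q * B) = 1 :=
    Matrix.nonsing_inv_mul _ hSdet
  have hRinv : (R₀ - γ * Q * B)⁻¹ = D⁻¹ * δ⁻¹ := by rw [← hδD, Matrix.mul_inv_rev]
  set L : Matrix (Fin t) (Fin m) ℂ := (β - α * Q * B) * (R₀ - γ * Q * B)⁻¹ with hL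
  have H1 : Q = (α - L * γ) * Q * A + L * C := by
    conv_lhs => rw [hQ]
    simp only [Matrix.mul_sub, Matrix.sub_mul, Matrix.add_mul, Matrix.mul_add, Matrix.mul_assoc]
    abel
  have H2 : δ * Ccirc = C - γ * Q * A := by
    rw [hCcirc, ← Matrix.mul_assoc, hδinv, Matrix.one_mul]
  have H3 : βcirc = L * δ := by
    rw [hβcirc, hL, hRinv, ← Matrix.mul_assoc, Matrix.mul_assoc _ δ⁻¹ δ, hδinv', Matrix.mul_one]
  have H4 : β = L * (δ * D) + α * Q * B := by
    rw [hδD, hL, Matrix.mul_assoc, hRS, Matrix.mul_one, sub_add_cancel]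
  constructor
  · -- Observability of (Ccirc, A)
    intro x hx
    have hx1 : ∀ k, (Ccirc * A ^ k) *ᵥ x = 0 := aux_ch_ext hs Ccirc A x hx
    have hC0 : ∀ k, ((C - γ * Q * A) * A ^ k) *ᵥ x = 0 := by
      intro k
      rw [← H2, Matrix.mul_assoc, ← Matrix.mulVec_mulVec, hx1 k, Matrix.mulVec_zero]
    have hCk : ∀ k, (C * A ^ k) *ᵥ x = (γ * (Q * A ^ (k+1))) *ᵥ x := by
      intro k
      have h := hC0 k
      rw [Matrix.sub_mul, Matrix.sub_mulVec, sub_eq_zero] at h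
      rw [h]
      congr 1
      rw [pow_succ']
      simp only [Matrix.mul_assoc]
    have hQk : ∀ k, (Q * A ^ k) *ᵥ x = (α * (Q * A ^ (k+1))) *ᵥ x := by
      intro k
      have e1 : Q * A ^ k = (α - L * γ) * (Q * A ^ (k+1)) + L * (C * A ^ k) := by
        conv_lhs => rw [H1]
        rw [pow_succ']
        simp only [Matrix.add_mul, Matrix.mul_assoc]
      have e2 : (L * (C * A ^ k)) *ᵥ x = (L * (γ * (Q * A ^ (k+1)))) *ᵥ x := by
        rw [← Matrix.mulVec_mulVec, hCk k, Matrix.mulVec_mulVec]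
      rw [e1, Matrix.add_mulVec, e2, ← Matrix.add_mulVec]
      congr 1
      rw [Matrix.sub_mul, ← Matrix.mul_assoc L γ, sub_add_cancel]
    have hQnk : ∀ k n, (Q * A ^ k) *ᵥ x = (α ^ n * (Q * A ^ k) * A ^ n) *ᵥ x := by
      intro k n
      have e2 : ∀ n, α ^ n * (Q * A ^ k) * A ^ n = α ^ n * (Q * A ^ (k + n)) := by
        intro n
        rw [pow_add]
        simp only [Matrix.mul_assoc]
      induction n with
      | zero => simp
      | succ n ihn =>
        rw [ihn, e2 n, ← Matrix.mulVec_mulVec, hQk (k + n), Matrix.mulVec_mulVec, e2 (n+1)]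
        congr 1
        rw [← Matrix.mul_assoc, ← pow_succ, Nat.add_assoc]
    have hQ0 : ∀ k, (Q * A ^ k) *ᵥ x = 0 := by
      intro k
      exact aux_key_vec ht hs α A hα (hA.trans Metric.ball_subset_closedBall) (Or.inr hA)
        (Q * A ^ k) x _ (hQnk k)
    refine hObsCA x fun k _ => ?_
    rw [hCk k, ← Matrix.mulVec_mulVec, hQ0 (k+1), Matrix.mulVec_zero]
  · -- Controllability of (α, βcirc)
    refine aux_span_top_of_dual _ fun y hy => ?_
    have hy1 : ∀ k, k < t → (βcircᵀ * (αᵀ) ^ k) *ᵥ y = 0 := by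
      intro k hk
      have e : βcircᵀ * (αᵀ) ^ k = (α ^ k * βcirc)ᵀ := by
        rw [Matrix.transpose_mul, Matrix.transpose_pow]
      rw [e, Matrix.mulVec_transpose]
      funext j
      have := hy (fun i => (α ^ k * βcirc) i j) ⟨k, hk, j, rfl⟩
      simpa [Matrix.vecMul, dotProduct] using this
    have hy2 : ∀ k, y ᵥ* (α ^ k * βcirc) = 0 := by
      intro k
      have h := aux_ch_ext ht βcircᵀ αᵀ y hy1 k
      have e : βcircᵀ * (αᵀ) ^ k = (α ^ k * βcirc)ᵀ := by
        rw [Matrix.transpose_mul, Matrix.transpose_pow]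
      rwa [e, Matrix.mulVec_transpose] at h
    have hyL : ∀ k, y ᵥ* (α ^ k * L) = 0 := by
      intro k
      have h := hy2 k
      rw [H3, ← Matrix.mul_assoc] at h
      have h2 := congrArg (fun w => w ᵥ* δ⁻¹) h
      simpa [Matrix.vecMul_vecMul, Matrix.mul_assoc, hδinv, Matrix.zero_vecMul,
        Matrix.mul_one] using h2
    have hQy : ∀ k, y ᵥ* (α ^ k * Q) = y ᵥ* (α ^ (k+1) * Q * A) := by
      intro k
      have e1 : α ^ k * Q = α ^ (k+1) * Q * A - (α ^ k * L) * (γ * (Q * A))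
          + (α ^ k * L) * C := by
        conv_lhs => rw [H1]
        rw [pow_succ]
        simp only [Matrix.mul_sub, Matrix.sub_mul, Matrix.mul_add, Matrix.add_mul,
          Matrix.mul_assoc]
      have t1 : y ᵥ* (α ^ k * L * (γ * (Q * A))) = 0 := by
        rw [← Matrix.vecMul_vecMul, hyL k, Matrix.zero_vecMul]
      have t2 : y ᵥ* (α ^ k * L * C) = 0 := by
        rw [← Matrix.vecMul_vecMul, hyL k, Matrix.zero_vecMul]
      rw [e1, Matrix.vecMul_add, Matrix.vecMul_sub, t1, t2, sub_zero, add_zero]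
    have hQy0 : ∀ k, y ᵥ* (α ^ k * Q) = 0 := by
      intro k
      have hiter : ∀ n, y ᵥ* (α ^ k * Q) = y ᵥ* (α ^ n * (α ^ k * Q) * A ^ n) := by
        intro n
        induction n with
        | zero => simp
        | succ n ihn =>
          rw [ihn]
          have e3 : α ^ n * (α ^ k * Q) * A ^ n = α ^ (k + n) * Q * A ^ n := by
            rw [← Matrix.mul_assoc, ← pow_add, Nat.add_comm n k]
          have e4 : α ^ (n+1) * (α ^ k * Q) * A ^ (n+1) = α ^ (k + n + 1) * Q * A * A ^ n := by
            rw [← Matrix.mul_assoc, ← pow_add, show n + 1 + k = k + n + 1 from by omega,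
              pow_succ' A n, ← Matrix.mul_assoc]
          rw [e3, e4]
          have h5 := hQy (k + n)
          calc y ᵥ* (α ^ (k+n) * Q * A ^ n) = (y ᵥ* (α ^ (k+n) * Q)) ᵥ* A ^ n := by
                rw [Matrix.vecMul_vecMul]
          _ = (y ᵥ* (α ^ (k+n+1) * Q * A)) ᵥ* A ^ n := by rw [h5]
          _ = y ᵥ* (α ^ (k+n+1) * Q * A * A ^ n) := by rw [Matrix.vecMul_vecMul]
      -- transpose to apply the key vector lemma
      have htr : ∀ n : ℕ, (α ^ k * Q)ᵀ *ᵥ y =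
          ((Aᵀ) ^ n * (α ^ k * Q)ᵀ * (αᵀ) ^ n) *ᵥ y := by
        intro n
        have e5 : (Aᵀ) ^ n * (α ^ k * Q)ᵀ * (αᵀ) ^ n = (α ^ n * (α ^ k * Q) * A ^ n)ᵀ := by
          simp only [Matrix.transpose_mul, Matrix.transpose_pow, Matrix.mul_assoc]
        rw [e5, Matrix.mulVec_transpose, Matrix.mulVec_transpose, ← hiter n]
      have hAt : spectrum ℂ Aᵀ ⊆ Metric.ball (0:ℂ) 1 := by
        rw [aux_spectrum_transpose]; exact hA
      have hαt : spectrum ℂ αᵀ ⊆ Metric.closedBall (0:ℂ) 1 := by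
        rw [aux_spectrum_transpose]; exact hα
      have := aux_key_vec hs ht Aᵀ αᵀ (hAt.trans Metric.ball_subset_closedBall) hαt
        (Or.inl hAt) (α ^ k * Q)ᵀ y _ htr
      rwa [Matrix.mulVec_transpose] at this
    have hyβ : ∀ v ∈ {v : Fin t → ℂ | ∃ k : ℕ, k < t ∧ ∃ j : Fin m,
        v = fun i => (α ^ k * β) i j}, y ⬝ᵥ v = 0 := by
      rintro v ⟨k, hk, j, rfl⟩
      have e6 : α ^ k * β = (α ^ k * L) * (δ * D) + (α ^ (k+1) * Q) * B := by
        conv_lhs => rw [H4]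
        rw [pow_succ]
        simp only [Matrix.mul_add, Matrix.mul_assoc]
      have e7 : y ᵥ* (α ^ k * β) = 0 := by
        rw [e6, Matrix.vecMul_add, ← Matrix.vecMul_vecMul, ← Matrix.vecMul_vecMul (N := B),
          hyL k, hQy0 (k+1), Matrix.zero_vecMul, Matrix.zero_vecMul, add_zero]
      have : y ⬝ᵥ (fun i => (α ^ k * β) i j) = (y ᵥ* (α ^ k * β)) j := by
        simp [Matrix.vecMul, dotProduct]
      rw [this, e7]
      rfl
    exact aux_dual_of_span_top _ hConαβ y hyβ
end

section
/- Let α be a t×t matrix whose spectrum is contained in the closed unit disc, let β be a t×m matrix, let r > 1, and let f : ℕ → ℂᵐ be a sequence with Σ_{k=0}^∞ r^{2k}‖f(k)‖² < ∞. Then the series Σ_{k=0}^∞ αᵏβ f(k) converges absolutely in ℂᵗ, i.e., Σ_{k=0}^∞ ‖αᵏβ f(k)‖ < ∞. (In particular, the subspace D_r is contained in the domain of the controllability operator associated with (α, β).) -/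
open Matrix

set_option maxHeartbeats 1000000 in
/-- if `α` is semi-stable, `r > 1`, and `(rᵏf(k))ₖ` is square-summable,
then the series `Σ αᵏβ f(k)` converges absolutely (Euclidean norms); i.e. `D_r` is
contained in the domain of the controllability operator of `(α, β)`. -/
theorem stmt_16 (m t : ℕ) (hm : 0 < m) (ht : 0 < t)
    (α : Matrix (Fin t) (Fin t) ℂ)
    (hα : spectrum ℂ α ⊆ Metric.closedBall (0 : ℂ) 1)
    (β : Matrix (Fin t) (Fin m) ℂ)
    (r : ℝ) (hr : 1 < r)
    (f : ℕ → Fin m → ℂ)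
    (hf : Summable (fun k : ℕ =>
      r ^ (2 * k) * ‖(EuclideanSpace.equiv (Fin m) ℂ).symm (f k)‖ ^ 2)) :
    Summable (fun k : ℕ =>
      ‖(EuclideanSpace.equiv (Fin t) ℂ).symm ((α ^ k * β) *ᵥ f k)‖) := by
  classical
  set A : EuclideanSpace ℂ (Fin t) →L[ℂ] EuclideanSpace ℂ (Fin t) :=
    Matrix.toEuclideanCLM (𝕜 := ℂ) α with hA
  set B : EuclideanSpace ℂ (Fin m) →L[ℂ] EuclideanSpace ℂ (Fin t) :=
    LinearMap.toContinuousLinearMap (Matrix.toEuclideanLin β) with hB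
  set x : ℕ → EuclideanSpace ℂ (Fin m) :=
    fun k => (EuclideanSpace.equiv (Fin m) ℂ).symm (f k) with hx
  -- the terms of the series as `A^k (B (x k))`
  have key : ∀ k : ℕ,
      (EuclideanSpace.equiv (Fin t) ℂ).symm ((α ^ k * β) *ᵥ f k) = (A ^ k) (B (x k)) := by
    intro k
    rw [hA, ← map_pow (Matrix.toEuclideanCLM (𝕜 := ℂ))]
    have hBx : B (x k) = (WithLp.equiv 2 (Fin t → ℂ)).symm (β *ᵥ f k) := rfl
    rw [hBx, ← Matrix.mulVec_mulVec]
    rfl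
  -- spectral radius of `A` is at most 1
  have hspec : spectrum ℂ A = spectrum ℂ α := AlgEquiv.spectrum_eq _ α
  have hρ : spectralRadius ℂ A ≤ 1 := by
    rw [spectralRadius]
    refine iSup₂_le fun z hz => ?_
    rw [hspec] at hz
    have := hα hz
    rw [Metric.mem_closedBall, dist_zero_right] at this
    exact_mod_cast this
  -- pick `s` with `1 < s < r`
  set s : ℝ := (1 + r) / 2 with hs
  have hs1 : 1 < s := by rw [hs]; linarith
  have hsr : s < r := by rw [hs]; linarith
  have hs0 : 0 < s := by linarith
  -- eventually `‖A^k‖ ≤ s^k`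
  have hlt : spectralRadius ℂ A < ENNReal.ofReal s := by
    calc spectralRadius ℂ A ≤ 1 := hρ
    _ < ENNReal.ofReal s := by
        rw [show (1 : ENNReal) = ENNReal.ofReal 1 by simp]
        exact (ENNReal.ofReal_lt_ofReal_iff hs0).mpr hs1
  have hev : ∀ᶠ k : ℕ in Filter.atTop, ‖A ^ k‖ ≤ s ^ k := by
    have h1 := (spectrum.pow_norm_pow_one_div_tendsto_nhds_spectralRadius A).eventually_lt_const hlt
    filter_upwards [h1, Filter.eventually_ge_atTop 1] with k hk h1k
    have hk' : ‖A ^ k‖ ^ (1 / (k : ℝ)) < s := by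
      have := (ENNReal.ofReal_lt_ofReal_iff hs0).mp hk
      exact this
    have hkne : (k : ℝ) ≠ 0 := by positivity
    have : (‖A ^ k‖ ^ (1 / (k : ℝ))) ^ (k : ℕ) ≤ s ^ k :=
      pow_le_pow_left₀ (Real.rpow_nonneg (norm_nonneg _) _) hk'.le k
    calc ‖A ^ k‖ = (‖A ^ k‖ ^ (1 / (k : ℝ))) ^ (k : ℕ) := by
          rw [← Real.rpow_natCast (‖A ^ k‖ ^ (1 / (k : ℝ))) k, ← Real.rpow_mul (norm_nonneg _),
            one_div, inv_mul_cancel₀ hkne, Real.rpow_one]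
      _ ≤ s ^ k := this
  -- the comparison series
  have hgeom : Summable (fun k : ℕ => ((s / r) ^ 2) ^ k) := by
    apply summable_geometric_of_lt_one (by positivity)
    have : s / r < 1 := (div_lt_one (by linarith)).mpr hsr
    calc (s / r) ^ 2 < 1 ^ 2 := by
          apply pow_lt_pow_left₀ this (by positivity)
          norm_num
      _ = 1 := one_pow 2
  have hsum : Summable (fun k : ℕ =>
      ‖B‖ * ((((s / r) ^ 2) ^ k + r ^ (2 * k) * ‖x k‖ ^ 2) / 2)) := by
    apply Summable.mul_left
    apply Summable.div_const
    exact hgeom.add hf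
  refine Summable.of_norm_bounded_eventually_nat hsum ?_
  filter_upwards [hev] with k hk
  rw [Real.norm_eq_abs, abs_of_nonneg (norm_nonneg _), key k]
  have h1 : ‖(A ^ k) (B (x k))‖ ≤ s ^ k * (‖B‖ * ‖x k‖) := by
    calc ‖(A ^ k) (B (x k))‖ ≤ ‖A ^ k‖ * ‖B (x k)‖ := (A ^ k).le_opNorm _
      _ ≤ ‖A ^ k‖ * (‖B‖ * ‖x k‖) := by
          apply mul_le_mul_of_nonneg_left (B.le_opNorm _) (norm_nonneg _)
      _ ≤ s ^ k * (‖B‖ * ‖x k‖) := by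
          apply mul_le_mul_of_nonneg_right hk (by positivity)
  refine h1.trans ?_
  -- `s^k * (‖B‖ * ‖x k‖) = ‖B‖ * ((s/r)^k * (r^k * ‖x k‖))`
  have h2 : s ^ k * (‖B‖ * ‖x k‖) = ‖B‖ * ((s / r) ^ k * (r ^ k * ‖x k‖)) := by
    field_simp
    rw [mul_assoc _ ((s / r) ^ k), ← mul_pow, div_mul_cancel₀ s (by linarith : r ≠ 0)]
    ring
  rw [h2]
  apply mul_le_mul_of_nonneg_left _ (norm_nonneg _)
  have hab : ∀ a b : ℝ, a * b ≤ (a ^ 2 + b ^ 2) / 2 := by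
    intro a b
    nlinarith [sq_nonneg (a - b)]
  calc (s / r) ^ k * (r ^ k * ‖x k‖)
      ≤ (((s / r) ^ k) ^ 2 + (r ^ k * ‖x k‖) ^ 2) / 2 := hab _ _
    _ = (((s / r) ^ 2) ^ k + r ^ (2 * k) * ‖x k‖ ^ 2) / 2 := by
        rw [mul_pow, ← pow_mul, ← pow_mul, ← pow_mul, mul_comm k 2, pow_mul]
end
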